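/- arXiv:math-ph/9812007 — 3 statements merged into one kernel-verified Lean document; each statement's English description precedes it below -/
import Mathlib

section
/- Let v, B : ℝ × ℝ³ → ℝ³ and φ : ℝ × ℝ³ → ℝ be smooth, and suppose B satisfies the frozen-field equation ∂B/∂t + (v·∇)B − (B·∇)v = 0 and φ is advected, ∂φ/∂t + v·∇φ = 0. Then the density ρ_φ := B·∇φ is advected along the flow: ∂ρ_φ/∂t + v·∇ρ_φ = 0 at every point of ℝ × ℝ³. -/
noncomputable section

open Matrix MeasureTheory

/-- Points of `ℝ³`, as functions `Fin 3 → ℝ`. -/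
abbrev V3 : Type := Fin 3 → ℝ

/-- The `i`-th standard basis vector of `ℝ³`. -/
def e3 (i : Fin 3) : V3 := Pi.single i 1

/-- Time derivative `∂f/∂t` of a time-dependent scalar field on `ℝ × ℝ³`. -/
def dtS (f : ℝ × V3 → ℝ) (q : ℝ × V3) : ℝ :=
  deriv (fun s => f (s, q.2)) q.1

/-- Spatial partial derivative `∂f/∂xᵢ` of a time-dependent scalar field. -/
def pd (i : Fin 3) (f : ℝ × V3 → ℝ) (q : ℝ × V3) : ℝ :=
  fderiv ℝ (fun y => f (q.1, y)) q.2 (e3 i)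

/-- Spatial gradient `∇f`. -/
def grad3 (f : ℝ × V3 → ℝ) (q : ℝ × V3) : V3 := fun i => pd i f q

/-- Time derivative `∂u/∂t` of a time-dependent vector field, componentwise. -/
def dtV (u : ℝ × V3 → V3) (q : ℝ × V3) : V3 := fun i => dtS (fun r => u r i) q

/-- Spatial divergence `∇·u`. -/
def div3 (u : ℝ × V3 → V3) (q : ℝ × V3) : ℝ := ∑ i, pd i (fun r => u r i) q

/-- Spatial curl `∇×u`. -/
def curl3 (u : ℝ × V3 → V3) (q : ℝ × V3) : V3 :=
  ![pd 1 (fun r => u r 2) q - pd 2 (fun r => u r 1) q,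
    pd 2 (fun r => u r 0) q - pd 0 (fun r => u r 2) q,
    pd 0 (fun r => u r 1) q - pd 1 (fun r => u r 0) q]

/-- Directional derivative `(v·∇)w` of a vector field along another. -/
def dirD (v w : ℝ × V3 → V3) (q : ℝ × V3) : V3 :=
  fun i => ∑ j, v q j * pd j (fun r => w r i) q

/-- Advective derivative `v·∇f` of a scalar field along `v`. -/
def adv (v : ℝ × V3 → V3) (f : ℝ × V3 → ℝ) (q : ℝ × V3) : ℝ :=
  ∑ j, v q j * pd j f q

lemma dtS_eq (f : ℝ × V3 → ℝ) (hf : ContDiff ℝ (⊤ : ℕ∞) f) (q : ℝ × V3) :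
    dtS f q = fderiv ℝ f q (1, 0) := by
  have h1 : HasFDerivAt (fun s : ℝ => (s, q.2))
      ((ContinuousLinearMap.id ℝ ℝ).prod 0) q.1 :=
    HasFDerivAt.prodMk (hasFDerivAt_id q.1) (hasFDerivAt_const q.2 q.1)
  have h2 := ((hf.differentiable (by simp) q).hasFDerivAt.comp q.1 h1).hasDerivAt
  simpa [dtS, Function.comp_def] using h2.deriv

lemma pd_eq (f : ℝ × V3 → ℝ) (hf : ContDiff ℝ (⊤ : ℕ∞) f) (i : Fin 3) (q : ℝ × V3) :
    pd i f q = fderiv ℝ f q ((0 : ℝ), e3 i) := by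
  have h1 : HasFDerivAt (fun y : V3 => (q.1, y))
      ((0 : V3 →L[ℝ] ℝ).prod (ContinuousLinearMap.id ℝ V3)) q.2 :=
    HasFDerivAt.prodMk (hasFDerivAt_const q.1 q.2) (hasFDerivAt_id q.2)
  have h2 := ((hf.differentiable (by simp) q).hasFDerivAt.comp q.2 h1).fderiv
  rw [pd, show (fun y : V3 => f (q.1, y)) = f ∘ (fun y : V3 => (q.1, y)) from rfl, h2]
  simp

lemma eval_smooth (f : ℝ × V3 → ℝ) (hf : ContDiff ℝ (⊤ : ℕ∞) f) (w : ℝ × V3) :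
    ContDiff ℝ (⊤ : ℕ∞) (fun r => fderiv ℝ f r w) :=
  (hf.fderiv_right (by simp)).clm_apply contDiff_const

lemma fderiv_eval (f : ℝ × V3 → ℝ) (hf : ContDiff ℝ (⊤ : ℕ∞) f) (w u : ℝ × V3) (q : ℝ × V3) :
    fderiv ℝ (fun r => fderiv ℝ f r w) q u = fderiv ℝ (fderiv ℝ f) q u w := by
  have hc : DifferentiableAt ℝ (fderiv ℝ f) q :=
    ((hf.fderiv_right (m := (⊤ : ℕ∞)) (by simp)).differentiable (by simp)) q
  rw [fderiv_clm_apply hc (differentiableAt_const w)]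
  simp

lemma symm2 (f : ℝ × V3 → ℝ) (hf : ContDiff ℝ (⊤ : ℕ∞) f) (u w q : ℝ × V3) :
    fderiv ℝ (fderiv ℝ f) q u w = fderiv ℝ (fderiv ℝ f) q w u :=
  (hf.contDiffAt.isSymmSndFDerivAt (by rw [minSmoothness_of_isRCLikeNormedField]; exact WithTop.coe_le_coe.2 (le_top : (2 : ℕ∞) ≤ ⊤))) u w

lemma fderiv_mul_apply (a c : ℝ × V3 → ℝ) (ha : ContDiff ℝ (⊤ : ℕ∞) a) (hc : ContDiff ℝ (⊤ : ℕ∞) c)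
    (q w : ℝ × V3) :
    fderiv ℝ (fun r => a r * c r) q w = fderiv ℝ a q w * c q + a q * fderiv ℝ c q w := by
  rw [fderiv_fun_mul (ha.differentiable (by simp) q) (hc.differentiable (by simp) q)]
  simp; ring

lemma fderiv_sum3 (F : Fin 3 → (ℝ × V3 → ℝ)) (hF : ∀ i, ContDiff ℝ (⊤ : ℕ∞) (F i)) (q w : ℝ × V3) :
    fderiv ℝ (fun r => ∑ i, F i r) q w = ∑ i, fderiv ℝ (F i) q w := by
  rw [fderiv_fun_sum (fun i _ => (hF i).differentiable (by simp) q)]; simp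

/-- If `B` is frozen-in (`∂B/∂t + (v·∇)B − (B·∇)v = 0`) and `φ` is
advected (`∂φ/∂t + v·∇φ = 0`), then the density `ρ_φ = B·∇φ` is advected along the flow:
`∂ρ_φ/∂t + v·∇ρ_φ = 0` everywhere. -/
theorem density_advected_of_frozen_and_advected
    (v B : ℝ × V3 → V3) (φ : ℝ × V3 → ℝ)
    (hv : ContDiff ℝ (⊤ : ℕ∞) v) (hB : ContDiff ℝ (⊤ : ℕ∞) B) (hφ : ContDiff ℝ (⊤ : ℕ∞) φ)
    (hfrozen : ∀ q i, dtV B q i + dirD v B q i - dirD B v q i = 0)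
    (hadv : ∀ q, dtS φ q + adv v φ q = 0) :
    ∀ q, dtS (fun r => B r ⬝ᵥ grad3 φ r) q + adv v (fun r => B r ⬝ᵥ grad3 φ r) q = 0 := by
  intro q
  set et : Fin 3 → ℝ × V3 := fun i => ((0 : ℝ), e3 i) with het
  have hBi : ∀ i, ContDiff ℝ (⊤ : ℕ∞) (fun r => B r i) := fun i => contDiff_pi.1 hB i
  have hvi : ∀ i, ContDiff ℝ (⊤ : ℕ∞) (fun r => v r i) := fun i => contDiff_pi.1 hv i
  set G : Fin 3 → (ℝ × V3 → ℝ) := fun i r => fderiv ℝ φ r (et i) with hG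
  have hGc : ∀ i, ContDiff ℝ (⊤ : ℕ∞) (G i) := fun i => eval_smooth φ hφ (et i)
  set ρ : ℝ × V3 → ℝ := fun r => ∑ i, B r i * G i r with hρdef
  have hρc : ContDiff ℝ (⊤ : ℕ∞) ρ := ContDiff.sum fun i _ => (hBi i).mul (hGc i)
  have hrw : (fun r => B r ⬝ᵥ grad3 φ r) = ρ := by
    funext r
    simp only [dotProduct, grad3, hρdef, hG, pd_eq φ hφ]
    rfl
  rw [hrw]
  have hDρ : ∀ w, fderiv ℝ ρ q w =
      ∑ i, (fderiv ℝ (fun r => B r i) q w * G i q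
        + B q i * fderiv ℝ (fderiv ℝ φ) q w (et i)) := by
    intro w
    rw [hρdef, fderiv_sum3 _ (fun i => (hBi i).mul (hGc i))]
    refine Finset.sum_congr rfl fun i _ => ?_
    rw [fderiv_mul_apply _ _ (hBi i) (hGc i), hG, fderiv_eval φ hφ (et i) w]
  have hA : ∀ i, fderiv ℝ (fderiv ℝ φ) q (et i) (1, 0)
      + ∑ j, (fderiv ℝ (fun r => v r j) q (et i) * fderiv ℝ φ q (et j)
        + v q j * fderiv ℝ (fderiv ℝ φ) q (et i) (et j)) = 0 := by
    intro i
    have hAfun : (fun r => fderiv ℝ φ r (1, 0) + ∑ j, v r j * fderiv ℝ φ r (et j))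
        = fun _ => (0 : ℝ) := by
      funext r
      have h := hadv r
      rw [dtS_eq φ hφ, adv] at h
      simpa [pd_eq φ hφ] using h
    have h0 : fderiv ℝ (fun r => fderiv ℝ φ r (1, 0)
        + ∑ j, v r j * fderiv ℝ φ r (et j)) q (et i) = 0 := by
      rw [hAfun]; simp
    have h1 : DifferentiableAt ℝ (fun r => fderiv ℝ φ r (1, 0)) q :=
      ((eval_smooth φ hφ (1, 0)).differentiable (by simp)) q
    have h2 : DifferentiableAt ℝ (fun r => ∑ j, v r j * fderiv ℝ φ r (et j)) q :=
      ((ContDiff.sum fun j _ => (hvi j).mul (eval_smooth φ hφ (et j))).differentiable (by simp)) q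
    rw [fderiv_fun_add h1 h2] at h0
    simp only [ContinuousLinearMap.add_apply] at h0
    rw [fderiv_eval φ hφ (1, 0) (et i),
      fderiv_sum3 _ (fun j => (hvi j).mul (eval_smooth φ hφ (et j)))] at h0
    rw [← h0]
    congr 1
    refine Finset.sum_congr rfl fun j _ => ?_
    rw [fderiv_mul_apply _ _ (hvi j) (eval_smooth φ hφ (et j)), fderiv_eval φ hφ (et j) (et i)]
  have hF : ∀ i, fderiv ℝ (fun r => B r i) q (1, 0)
      + ∑ j, v q j * fderiv ℝ (fun r => B r i) q (et j)
      - ∑ j, B q j * fderiv ℝ (fun r => v r i) q (et j) = 0 := by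
    intro i
    have h := hfrozen q i
    rw [dtV, dirD, dirD, dtS_eq _ (hBi i)] at h
    simpa [pd_eq _ (hBi i), pd_eq _ (hvi i)] using h
  rw [dtS_eq ρ hρc, adv]
  simp only [pd_eq ρ hρc]
  simp only [hDρ]
  have hsym : ∀ u w, fderiv ℝ (fderiv ℝ φ) q u w = fderiv ℝ (fderiv ℝ φ) q w u :=
    fun u w => symm2 φ hφ u w q
  simp only [Fin.sum_univ_three] at hA hF ⊢
  simp only [hG]
  linear_combination
    fderiv ℝ φ q (et 0) * hF 0 + fderiv ℝ φ q (et 1) * hF 1 + fderiv ℝ φ q (et 2) * hF 2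
    + B q 0 * hA 0 + B q 1 * hA 1 + B q 2 * hA 2
    + B q 0 * hsym (1, 0) (et 0) + B q 1 * hsym (1, 0) (et 1) + B q 2 * hsym (1, 0) (et 2)
    + (v q 0 * B q 0) * hsym (et 0) (et 0)
    + (v q 0 * B q 1) * hsym (et 0) (et 1)
    + (v q 0 * B q 2) * hsym (et 0) (et 2)
    + (v q 1 * B q 0) * hsym (et 1) (et 0)
    + (v q 1 * B q 1) * hsym (et 1) (et 1)
    + (v q 2 * B q 0) * hsym (et 2) (et 0)
    + (v q 1 * B q 2) * hsym (et 1) (et 2)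
    + (v q 2 * B q 1) * hsym (et 2) (et 1)
    + (v q 2 * B q 2) * hsym (et 2) (et 2)
end
end

section
/- Let λ, φ : ℝ³ → ℝ be smooth and define for each smooth f : ℝ³ → ℝ the Hamiltonian vector field X_f := λ ∇φ × ∇f, and the bracket {f,g} := λ ∇φ·(∇f × ∇g). Then for all smooth f, g : ℝ³ → ℝ the Lie bracket of Hamiltonian vector fields satisfies [X_f, X_g] = X_{{f,g}}, where [X,Y] := (X·∇)Y − (Y·∇)X; i.e., the assignment f ↦ X_f is a Lie algebra homomorphism from the Poisson bracket algebra of functions to the Lie algebra of vector fields on ℝ³. -/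
noncomputable section

open Matrix

/-- Gradient `∇f` of a scalar field on `ℝ³`. -/
def gradS (f : V3 → ℝ) (x : V3) : V3 := fun i => fderiv ℝ f x (e3 i)

/-- The Nambu–Poisson bracket `{f,g} = λ ∇φ·(∇f × ∇g)` on `C^∞(ℝ³)` determined by the
Casimir `φ` and the conformal factor `λ`. -/
def nb (lam φ f g : V3 → ℝ) (x : V3) : ℝ :=
  lam x * (gradS φ x ⬝ᵥ crossProduct (gradS f x) (gradS g x))

/-- The Hamiltonian vector field `X_f = λ ∇φ × ∇f` of `f` for the Nambu–Poisson
structure determined by `φ` and `λ`. -/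
def ham (lam φ f : V3 → ℝ) (x : V3) : V3 :=
  lam x • crossProduct (gradS φ x) (gradS f x)

/-- Directional derivative `(X·∇)Y` of a vector field on `ℝ³` along another. -/
def dirDS (X Y : V3 → V3) (x : V3) : V3 :=
  fun i => ∑ j, X x j * fderiv ℝ (fun y => Y y i) x (e3 j)

/-! ### Auxiliary material -/

/-- First partial derivative. -/
def D (h : V3 → ℝ) (x : V3) (i : Fin 3) : ℝ := fderiv ℝ h x (e3 i)

/-- Second partial derivative. -/
def D2 (h : V3 → ℝ) (x : V3) (i j : Fin 3) : ℝ := fderiv ℝ (fun y => D h y i) x (e3 j)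

lemma smoothD {h : V3 → ℝ} (hh : ContDiff ℝ (⊤ : ℕ∞) h) (i : Fin 3) :
    ContDiff ℝ (⊤ : ℕ∞) (fun y => D h y i) :=
  (hh.fderiv_right (by simp)).clm_apply contDiff_const

lemma diffD {h : V3 → ℝ} (hh : ContDiff ℝ (⊤ : ℕ∞) h) (i : Fin 3) (x : V3) :
    DifferentiableAt ℝ (fun y => D h y i) x :=
  (smoothD hh i).differentiable (by simp) x

lemma D2_symm {h : V3 → ℝ} (hh : ContDiff ℝ (⊤ : ℕ∞) h) (x : V3) (i j : Fin 3) :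
    D2 h x i j = D2 h x j i := by
  have hd : DifferentiableAt ℝ (fderiv ℝ h) x :=
    (hh.fderiv_right (m := (⊤ : ℕ∞)) (by simp)).differentiable (by simp) x
  have key : ∀ p q : Fin 3, D2 h x p q = fderiv ℝ (fderiv ℝ h) x (e3 q) (e3 p) := by
    intro p q
    have : (fun y => D h y p) = fun y => (fderiv ℝ h y) (e3 p) := rfl
    rw [D2, this, fderiv_clm_apply hd (differentiableAt_const _)]
    simp
  rw [key, key]
  exact (hh.contDiffAt.isSymmSndFDerivAt (by rw [minSmoothness_of_isRCLikeNormedField]; exact WithTop.coe_le_coe.mpr le_top)).eq _ _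

lemma DD {u v : V3 → ℝ} (hu : ContDiff ℝ (⊤ : ℕ∞) u) (hv : ContDiff ℝ (⊤ : ℕ∞) v)
    (p q j : Fin 3) (x : V3) :
    fderiv ℝ (fun y => D u y p * D v y q) x (e3 j)
      = D2 u x p j * D v x q + D u x p * D2 v x q j := by
  rw [fderiv_fun_mul (diffD hu p x) (diffD hv q x)]
  simp [D, D2]
  ring

section
variable {lam φ f g : V3 → ℝ}

lemma keyH (hlam : ContDiff ℝ (⊤ : ℕ∞) lam) {u v : V3 → ℝ}
    (hu : ContDiff ℝ (⊤ : ℕ∞) u) (hv : ContDiff ℝ (⊤ : ℕ∞) v)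
    (p q j : Fin 3) (x : V3) :
    fderiv ℝ (fun y => lam y * (D u y p * D v y q - D u y q * D v y p)) x (e3 j)
      = D lam x j * (D u x p * D v x q - D u x q * D v x p)
      + lam x * (D2 u x p j * D v x q + D u x p * D2 v x q j
               - D2 u x q j * D v x p - D u x q * D2 v x p j) := by
  have hW : DifferentiableAt ℝ (fun y => D u y p * D v y q - D u y q * D v y p) x :=
    (((smoothD hu p).mul (smoothD hv q)).sub
      ((smoothD hu q).mul (smoothD hv p))).differentiable (by simp) x
  rw [fderiv_fun_mul (hlam.differentiable (by simp) x) hW]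
  have hsub : fderiv ℝ (fun y => D u y p * D v y q - D u y q * D v y p) x (e3 j)
      = fderiv ℝ (fun y => D u y p * D v y q) x (e3 j)
      - fderiv ℝ (fun y => D u y q * D v y p) x (e3 j) := by
    rw [fderiv_fun_sub (((smoothD hu p).mul (smoothD hv q)).differentiable (by simp) x)
      (((smoothD hu q).mul (smoothD hv p)).differentiable (by simp) x)]
    simp
  simp only [ContinuousLinearMap.add_apply, ContinuousLinearMap.coe_smul',
    Pi.smul_apply, smul_eq_mul, hsub, DD hu hv p q j x, DD hu hv q p j x]
  show lam x * _ + (_) * D lam x j = _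
  ring

lemma Dtrip (hφ : ContDiff ℝ (⊤ : ℕ∞) φ) (hf : ContDiff ℝ (⊤ : ℕ∞) f) (hg : ContDiff ℝ (⊤ : ℕ∞) g)
    (p q r j : Fin 3) (x : V3) :
    fderiv ℝ (fun y => D φ y p * (D f y q * D g y r - D f y r * D g y q)) x (e3 j)
      = D2 φ x p j * (D f x q * D g x r - D f x r * D g x q)
      + D φ x p * (D2 f x q j * D g x r + D f x q * D2 g x r j
                 - D2 f x r j * D g x q - D f x r * D2 g x q j) := by
  have hW : DifferentiableAt ℝ (fun y => D f y q * D g y r - D f y r * D g y q) x :=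
    (((smoothD hf q).mul (smoothD hg r)).sub
      ((smoothD hf r).mul (smoothD hg q))).differentiable (by simp) x
  rw [fderiv_fun_mul (diffD hφ p x) hW]
  have hsub : fderiv ℝ (fun y => D f y q * D g y r - D f y r * D g y q) x (e3 j)
      = fderiv ℝ (fun y => D f y q * D g y r) x (e3 j)
      - fderiv ℝ (fun y => D f y r * D g y q) x (e3 j) := by
    rw [fderiv_fun_sub (((smoothD hf q).mul (smoothD hg r)).differentiable (by simp) x)
      (((smoothD hf r).mul (smoothD hg q)).differentiable (by simp) x)]
    simp
  simp only [ContinuousLinearMap.add_apply, ContinuousLinearMap.coe_smul',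
    Pi.smul_apply, smul_eq_mul, hsub, DD hf hg q r j x, DD hf hg r q j x]
  show D φ x p * _ + (_) * D2 φ x p j = _
  ring

lemma nb_eq :
    nb lam φ f g = fun y =>
      lam y * (D φ y 0 * (D f y 1 * D g y 2 - D f y 2 * D g y 1)
             + D φ y 1 * (D f y 2 * D g y 0 - D f y 0 * D g y 2)
             + D φ y 2 * (D f y 0 * D g y 1 - D f y 1 * D g y 0)) := by
  funext y
  simp [nb, gradS, D, cross_apply, dotProduct, Fin.sum_univ_three]

lemma hamv (u : V3 → ℝ) (y : V3) :
    (ham lam φ u y 0 = lam y * (D φ y 1 * D u y 2 - D φ y 2 * D u y 1))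
  ∧ (ham lam φ u y 1 = lam y * (D φ y 2 * D u y 0 - D φ y 0 * D u y 2))
  ∧ (ham lam φ u y 2 = lam y * (D φ y 0 * D u y 1 - D φ y 1 * D u y 0)) := by
  refine ⟨?_, ?_, ?_⟩ <;> simp [ham, gradS, D, cross_apply, smul_eq_mul]

lemma D_nb (hlam : ContDiff ℝ (⊤ : ℕ∞) lam) (hφ : ContDiff ℝ (⊤ : ℕ∞) φ)
    (hf : ContDiff ℝ (⊤ : ℕ∞) f) (hg : ContDiff ℝ (⊤ : ℕ∞) g) (j : Fin 3) (x : V3) :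
    D (nb lam φ f g) x j
      = D lam x j * (D φ x 0 * (D f x 1 * D g x 2 - D f x 2 * D g x 1)
                   + D φ x 1 * (D f x 2 * D g x 0 - D f x 0 * D g x 2)
                   + D φ x 2 * (D f x 0 * D g x 1 - D f x 1 * D g x 0))
      + lam x *
        ( (D2 φ x 0 j * (D f x 1 * D g x 2 - D f x 2 * D g x 1)
           + D φ x 0 * (D2 f x 1 j * D g x 2 + D f x 1 * D2 g x 2 j
                      - D2 f x 2 j * D g x 1 - D f x 2 * D2 g x 1 j))
        + (D2 φ x 1 j * (D f x 2 * D g x 0 - D f x 0 * D g x 2)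
           + D φ x 1 * (D2 f x 2 j * D g x 0 + D f x 2 * D2 g x 0 j
                      - D2 f x 0 j * D g x 2 - D f x 0 * D2 g x 2 j))
        + (D2 φ x 2 j * (D f x 0 * D g x 1 - D f x 1 * D g x 0)
           + D φ x 2 * (D2 f x 0 j * D g x 1 + D f x 0 * D2 g x 1 j
                      - D2 f x 1 j * D g x 0 - D f x 1 * D2 g x 0 j)) ) := by
  have t : ∀ p q r : Fin 3,
      DifferentiableAt ℝ (fun y => D φ y p * (D f y q * D g y r - D f y r * D g y q)) x :=
    fun p q r => ((smoothD hφ p).mul (((smoothD hf q).mul (smoothD hg r)).sub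
      ((smoothD hf r).mul (smoothD hg q)))).differentiable (by simp) x
  have hS : DifferentiableAt ℝ (fun y =>
      D φ y 0 * (D f y 1 * D g y 2 - D f y 2 * D g y 1)
    + D φ y 1 * (D f y 2 * D g y 0 - D f y 0 * D g y 2)
    + D φ y 2 * (D f y 0 * D g y 1 - D f y 1 * D g y 0)) x :=
    ((t 0 1 2).add (t 1 2 0)).add (t 2 0 1)
  rw [D, nb_eq, fderiv_fun_mul (hlam.differentiable (by simp) x) hS]
  have hadd : fderiv ℝ (fun y =>
      D φ y 0 * (D f y 1 * D g y 2 - D f y 2 * D g y 1)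
    + D φ y 1 * (D f y 2 * D g y 0 - D f y 0 * D g y 2)
    + D φ y 2 * (D f y 0 * D g y 1 - D f y 1 * D g y 0)) x (e3 j)
      = fderiv ℝ (fun y => D φ y 0 * (D f y 1 * D g y 2 - D f y 2 * D g y 1)) x (e3 j)
      + fderiv ℝ (fun y => D φ y 1 * (D f y 2 * D g y 0 - D f y 0 * D g y 2)) x (e3 j)
      + fderiv ℝ (fun y => D φ y 2 * (D f y 0 * D g y 1 - D f y 1 * D g y 0)) x (e3 j) := by
    rw [fderiv_fun_add ((t 0 1 2).fun_add (t 1 2 0)) (t 2 0 1), fderiv_fun_add (t 0 1 2) (t 1 2 0)]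
    simp
  simp only [ContinuousLinearMap.add_apply, ContinuousLinearMap.coe_smul',
    Pi.smul_apply, smul_eq_mul, hadd,
    Dtrip hφ hf hg 0 1 2 j x, Dtrip hφ hf hg 1 2 0 j x, Dtrip hφ hf hg 2 0 1 j x]
  rw [show D lam x j = fderiv ℝ lam x (e3 j) from rfl]
  ring

end

/-- For smooth `λ, φ` and smooth `f, g`, the Hamiltonian vector fields
`X_f = λ ∇φ × ∇f` satisfy `[X_f, X_g] = X_{{f,g}}` where `[X,Y] = (X·∇)Y − (Y·∇)X` and
`{f,g} = λ ∇φ·(∇f × ∇g)`: the assignment `f ↦ X_f` is a Lie algebra homomorphism. -/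
theorem hamiltonian_vector_field_homomorphism
    (lam φ : V3 → ℝ) (hlam : ContDiff ℝ (⊤ : ℕ∞) lam) (hφ : ContDiff ℝ (⊤ : ℕ∞) φ)
    (f g : V3 → ℝ) (hf : ContDiff ℝ (⊤ : ℕ∞) f) (hg : ContDiff ℝ (⊤ : ℕ∞) g) :
    ∀ x i, dirDS (ham lam φ f) (ham lam φ g) x i
         - dirDS (ham lam φ g) (ham lam φ f) x i
         = ham lam φ (nb lam φ f g) x i := by
  intro x i
  have hnb : ContDiff ℝ (⊤ : ℕ∞) (nb lam φ f g) := by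
    rw [nb_eq]
    exact hlam.mul ((((smoothD hφ 0).mul (((smoothD hf 1).mul (smoothD hg 2)).sub
      ((smoothD hf 2).mul (smoothD hg 1)))).add
      ((smoothD hφ 1).mul (((smoothD hf 2).mul (smoothD hg 0)).sub
      ((smoothD hf 0).mul (smoothD hg 2))))).add
      ((smoothD hφ 2).mul (((smoothD hf 0).mul (smoothD hg 1)).sub
      ((smoothD hf 1).mul (smoothD hg 0)))))
  have H0 := fun (u : V3 → ℝ) (y : V3) => (hamv (lam := lam) (φ := φ) u y).1
  have H1 := fun (u : V3 → ℝ) (y : V3) => (hamv (lam := lam) (φ := φ) u y).2.1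
  have H2 := fun (u : V3 → ℝ) (y : V3) => (hamv (lam := lam) (φ := φ) u y).2.2
  have hmk0 : (⟨0, by omega⟩ : Fin 3) = 0 := rfl
  have hmk1 : (⟨1, by omega⟩ : Fin 3) = 1 := rfl
  have hmk2 : (⟨2, by omega⟩ : Fin 3) = 2 := rfl
  fin_cases i <;>
  · simp only [dirDS, Fin.sum_univ_three, Fin.isValue, hmk0, hmk1, hmk2, H0, H1, H2,
      keyH hlam hφ hf, keyH hlam hφ hg,
      D_nb hlam hφ hf hg]
    simp only [D2_symm hφ x 1 0, D2_symm hφ x 2 0, D2_symm hφ x 2 1,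
      D2_symm hf x 1 0, D2_symm hf x 2 0, D2_symm hf x 2 1,
      D2_symm hg x 1 0, D2_symm hg x 2 0, D2_symm hg x 2 1]
    ring
end
end

section
/- Let v, A, C : ℝ × ℝ³ → ℝ³ and ψ : ℝ × ℝ³ → ℝ be smooth. Assume C is divergence-free (∇·C(t,·) = 0), C satisfies the frozen-field equation ∂C/∂t = ∇×(v×C), and the potential A satisfies ∂A/∂t + (∇×A)×v = ∇ψ. Then the generalized helicity density A·C obeys the Eulerian conservation law ∂(A·C)/∂t + ∇·( (A·C) v − (ψ + v·A) C ) = 0 at every point of ℝ × ℝ³. -/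
noncomputable section

open Matrix MeasureTheory

lemma sliceDiffAt {f : ℝ × V3 → ℝ} (hf : ContDiff ℝ (⊤ : ℕ∞) f) (t : ℝ) (x : V3) :
    DifferentiableAt ℝ (fun y => f (t, y)) x :=
  (hf.differentiable (by simp) (t, x)).comp x ((differentiableAt_const t).prodMk differentiableAt_id)

lemma timeDiffAt {f : ℝ × V3 → ℝ} (hf : ContDiff ℝ (⊤ : ℕ∞) f) (t : ℝ) (x : V3) :
    DifferentiableAt ℝ (fun s => f (s, x)) t :=
  (hf.differentiable (by simp) (t, x)).comp t (differentiableAt_id.prodMk (differentiableAt_const x))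

lemma pd_mul (i : Fin 3) (f g : ℝ × V3 → ℝ) (hf : ContDiff ℝ (⊤ : ℕ∞) f) (hg : ContDiff ℝ (⊤ : ℕ∞) g)
    (q : ℝ × V3) : pd i (fun r => f r * g r) q = pd i f q * g q + f q * pd i g q := by
  unfold pd
  rw [show (fun y => (fun r => f r * g r) (q.1, y)) = fun y => f (q.1, y) * g (q.1, y) from rfl,
    fderiv_fun_mul (sliceDiffAt hf q.1 q.2) (sliceDiffAt hg q.1 q.2)]
  simp
  ring

lemma pd_add (i : Fin 3) (f g : ℝ × V3 → ℝ) (hf : ContDiff ℝ (⊤ : ℕ∞) f) (hg : ContDiff ℝ (⊤ : ℕ∞) g)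
    (q : ℝ × V3) : pd i (fun r => f r + g r) q = pd i f q + pd i g q := by
  unfold pd
  rw [show (fun y => (fun r => f r + g r) (q.1, y)) = fun y => f (q.1, y) + g (q.1, y) from rfl,
    fderiv_fun_add (sliceDiffAt hf q.1 q.2) (sliceDiffAt hg q.1 q.2)]
  simp

lemma pd_sub (i : Fin 3) (f g : ℝ × V3 → ℝ) (hf : ContDiff ℝ (⊤ : ℕ∞) f) (hg : ContDiff ℝ (⊤ : ℕ∞) g)
    (q : ℝ × V3) : pd i (fun r => f r - g r) q = pd i f q - pd i g q := by
  unfold pd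
  rw [show (fun y => (fun r => f r - g r) (q.1, y)) = fun y => f (q.1, y) - g (q.1, y) from rfl,
    fderiv_fun_sub (sliceDiffAt hf q.1 q.2) (sliceDiffAt hg q.1 q.2)]
  simp

lemma dtS_mul (f g : ℝ × V3 → ℝ) (hf : ContDiff ℝ (⊤ : ℕ∞) f) (hg : ContDiff ℝ (⊤ : ℕ∞) g)
    (q : ℝ × V3) : dtS (fun r => f r * g r) q = dtS f q * g q + f q * dtS g q := by
  unfold dtS
  rw [show (fun s => (fun r => f r * g r) (s, q.2)) = fun s => f (s, q.2) * g (s, q.2) from rfl,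
    deriv_fun_mul (timeDiffAt hf q.1 q.2) (timeDiffAt hg q.1 q.2)]

lemma dtS_add (f g : ℝ × V3 → ℝ) (hf : ContDiff ℝ (⊤ : ℕ∞) f) (hg : ContDiff ℝ (⊤ : ℕ∞) g)
    (q : ℝ × V3) : dtS (fun r => f r + g r) q = dtS f q + dtS g q := by
  unfold dtS
  rw [show (fun s => (fun r => f r + g r) (s, q.2)) = fun s => f (s, q.2) + g (s, q.2) from rfl,
    deriv_fun_add (timeDiffAt hf q.1 q.2) (timeDiffAt hg q.1 q.2)]

/-- Let `C` be divergence-free and frozen-in (`∂C/∂t = ∇×(v×C)`), and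
let the potential `A` satisfy `∂A/∂t + (∇×A)×v = ∇ψ`. Then the generalized helicity
density `A·C` obeys the Eulerian conservation law
`∂(A·C)/∂t + ∇·((A·C) v − (ψ + v·A) C) = 0` everywhere. -/
theorem generalized_helicity_eulerian_law
    (v A C : ℝ × V3 → V3) (ψ : ℝ × V3 → ℝ)
    (hv : ContDiff ℝ (⊤ : ℕ∞) v) (hA : ContDiff ℝ (⊤ : ℕ∞) A) (hC : ContDiff ℝ (⊤ : ℕ∞) C)
    (hψ : ContDiff ℝ (⊤ : ℕ∞) ψ)
    (hdC : ∀ q, div3 C q = 0)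
    (hfrozen : ∀ q i, dtV C q i = curl3 (fun r => crossProduct (v r) (C r)) q i)
    (hpot : ∀ q i, dtV A q i + crossProduct (curl3 A q) (v q) i = grad3 ψ q i) :
    ∀ q, dtS (fun r => A r ⬝ᵥ C r) q
      + div3 (fun r => (A r ⬝ᵥ C r) • v r - (ψ r + v r ⬝ᵥ A r) • C r) q = 0 := by
  intro q
  have hd := hdC q
  simp only [div3, Fin.sum_univ_three] at hd
  have hf0 := hfrozen q 0
  have hf1 := hfrozen q 1
  have hf2 := hfrozen q 2
  simp only [dtV, curl3, cross_apply, Matrix.cons_val_zero, Matrix.cons_val_one,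
    Matrix.head_cons, Matrix.cons_val_two, Matrix.tail_cons, Fin.isValue] at hf0 hf1 hf2
  simp (disch := fun_prop) only [pd_sub, pd_mul] at hf0 hf1 hf2
  have hp0 := hpot q 0
  have hp1 := hpot q 1
  have hp2 := hpot q 2
  simp only [dtV, curl3, grad3, cross_apply, Matrix.cons_val_zero, Matrix.cons_val_one,
    Matrix.head_cons, Matrix.cons_val_two, Matrix.tail_cons, Fin.isValue] at hp0 hp1 hp2
  simp only [div3, dotProduct, Fin.sum_univ_three, Pi.sub_apply, Pi.smul_apply, smul_eq_mul]
  simp (disch := fun_prop) only [pd_sub, pd_add, pd_mul, dtS_add, dtS_mul]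
  linear_combination (A q 0) * hf0 + (A q 1) * hf1 + (A q 2) * hf2
    + (C q 0) * hp0 + (C q 1) * hp1 + (C q 2) * hp2 - ψ q * hd
end
end
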